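/- arXiv:0810.2263 — 2 statements merged into one kernel-verified Lean document; each statement's English description precedes it below -/
import Mathlib

section
/- Let A be a finite set, v a score matrix with v_{xy} + v_{yx} ≤ 1, and define u_{xy} = v_{xy} if v_{xy} > v_{yx} and u_{xy} = 0 otherwise; w_{xy} = v_{xy} if v_{xy} ≥ v_{yx} and w_{xy} = 0 otherwise. Then for all distinct x, y: u*_{xy} ≤ w*_{xy} ≤ v*_{xy}; moreover, if v*_{xy} > 1/2 then u*_{xy} = w*_{xy} = v*_{xy}, and if v*_{xy} = 1/2 then w*_{xy} = v*_{xy}. -/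
/-- The score of a path (a list of vertices): the minimum of the scores
of its consecutive links. -/
def pathScore {A : Type*} (v : A → A → ℝ) : List A → ℝ
  | [] => 0
  | [_] => 0
  | [a, b] => v a b
  | a :: b :: c :: l => min (v a b) (pathScore v (b :: c :: l))

/-- `l` is a path from `x` to `y`: a list with at least two entries,
starting at `x` and ending at `y`. -/
def IsPath {A : Type*} (x y : A) (l : List A) : Prop :=
  2 ≤ l.length ∧ l.head? = some x ∧ l.getLast? = some y

/-- The max-min indirect score `v*_{xy}`: the supremum (attained, since the
set of path scores is finite) of path scores over all paths from `x` to `y`. -/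
noncomputable def indirectScore {A : Type*} (v : A → A → ℝ) (x y : A) : ℝ :=
  ⨆ l : {l : List A // IsPath x y l}, pathScore v l.1

/-!
A threshold `m` satisfies `m ≤ p*_{xy}` exactly when `y` is reachable from `x` along links of
`p`-score at least `m`. The two inequalities follow from monotonicity. For the equalities, take
`m = v*_{xy}`: the reaching chain may be taken without loops `a → a` (where `u` vanishes), and
on a link `a ≠ b` with `v_{ab} ≥ m` the bound `v_{ab} + v_{ba} ≤ 1` gives `v_{ba} < v_{ab}` when
`m > 1/2` (so `u_{ab} = v_{ab}`) and `v_{ba} ≤ v_{ab}` when `m = 1/2` (so `w_{ab} = v_{ab}`).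
Hence the chain also reaches `y` for `u`, resp. `w`.
-/

namespace Relation

theorem ReflTransGen.ne_and {α : Type*} {r : α → α → Prop} {x y : α}
    (h : ReflTransGen r x y) : ReflTransGen (fun a b => a ≠ b ∧ r a b) x y := by
  induction h with
  | refl => exact .refl
  | @tail b c _ hbc ih =>
    by_cases hb : b = c
    · exact hb ▸ ih
    · exact ih.tail ⟨hb, hbc⟩

theorem TransGen.ne_and {α : Type*} {r : α → α → Prop} {x y : α}
    (h : TransGen r x y) (hxy : x ≠ y) : TransGen (fun a b => a ≠ b ∧ r a b) x y :=
  (reflTransGen_iff_eq_or_transGen.mp h.to_reflTransGen.ne_and).resolve_left hxy.symm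

end Relation

section IndirectScore

variable {A : Type*} {p q : A → A → ℝ} {x y : A} {m : ℝ}

theorem pathScore_mem_insert_range :
    ∀ l : List A, pathScore p l ∈ insert 0 (Set.range fun ab : A × A => p ab.1 ab.2)
  | [] | [_] => Set.mem_insert _ _
  | [a, b] => Set.mem_insert_of_mem _ ⟨(a, b), rfl⟩
  | a :: b :: c :: l => by
    change min (p a b) (pathScore p (b :: c :: l)) ∈ _
    rcases min_choice (p a b) (pathScore p (b :: c :: l)) with h | h <;> rw [h]
    · exact Set.mem_insert_of_mem _ ⟨(a, b), rfl⟩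
    · exact pathScore_mem_insert_range (b :: c :: l)

theorem le_pathScore_iff_isChain :
    ∀ {l : List A}, 2 ≤ l.length → (m ≤ pathScore p l ↔ l.IsChain fun a b => m ≤ p a b)
  | [], h | [_], h => by simp at h
  | [a, b], _ => by rw [List.isChain_pair]; rfl
  | a :: b :: c :: l, _ => by
    rw [List.isChain_cons_cons, ← le_pathScore_iff_isChain (by simp)]
    exact le_min_iff

theorem exists_isPath_isChain_iff_transGen {r : A → A → Prop} :
    (∃ l, IsPath x y l ∧ l.IsChain r) ↔ Relation.TransGen r x y := by
  rw [Relation.TransGen.head'_iff]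
  constructor
  · rintro ⟨_ | ⟨a, _ | ⟨b, t⟩⟩, ⟨hlen, hx, hy⟩, hchain⟩
    · simp at hlen
    · simp at hlen
    · obtain rfl : a = x := by simpa using hx
      rw [List.isChain_cons_cons] at hchain
      refine ⟨b, hchain.1, List.relationReflTransGen_of_exists_isChain_cons t hchain.2 ?_⟩
      simpa [List.getLast?_eq_some_getLast] using hy
  · rintro ⟨b, hxb, hby⟩
    obtain ⟨t, hchain, hlast⟩ := List.exists_isChain_cons_of_relationReflTransGen hby
    refine ⟨x :: b :: t, ⟨by simp, rfl, ?_⟩, List.isChain_cons_cons.mpr ⟨hxb, hchain⟩⟩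
    simp [List.getLast?_eq_some_getLast, hlast]

variable [Finite A]

theorem le_indirectScore_iff_exists_pathScore :
    m ≤ indirectScore p x y ↔ ∃ l, IsPath x y l ∧ m ≤ pathScore p l := by
  have hfin : (Set.range fun l : {l // IsPath x y l} => pathScore p l.1).Finite :=
    ((Set.finite_range _).insert 0).subset (Set.range_subset_iff.mpr fun l =>
      pathScore_mem_insert_range l.1)
  have : Nonempty {l // IsPath x y l} := ⟨⟨[x, y], by simp [IsPath]⟩⟩
  constructor
  · intro hm
    obtain ⟨⟨l, hl⟩, hsup⟩ := (Set.range_nonempty _).csSup_mem hfin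
    exact ⟨l, hl, hm.trans_eq hsup.symm⟩
  · rintro ⟨l, hl, hm⟩
    exact le_ciSup_of_le hfin.bddAbove ⟨l, hl⟩ hm

theorem le_indirectScore_iff_transGen :
    m ≤ indirectScore p x y ↔ Relation.TransGen (fun a b => m ≤ p a b) x y := by
  rw [le_indirectScore_iff_exists_pathScore, ← exists_isPath_isChain_iff_transGen]
  exact exists_congr fun l => and_congr_right fun hl => le_pathScore_iff_isChain hl.1

theorem indirectScore_mono (h : ∀ a b, p a b ≤ q a b) :
    indirectScore p x y ≤ indirectScore q x y :=
  le_indirectScore_iff_transGen.mpr <|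
    Relation.TransGen.mono (fun a b hab => hab.trans (h a b)) _ _
      (le_indirectScore_iff_transGen.mp le_rfl)

theorem le_indirectScore_of_ne (hxy : x ≠ y) (h : ∀ a b, a ≠ b → m ≤ p a b → m ≤ q a b)
    (hm : m ≤ indirectScore p x y) : m ≤ indirectScore q x y :=
  le_indirectScore_iff_transGen.mpr <|
    Relation.TransGen.mono (fun a b hab => h a b hab.1 hab.2) _ _
      ((le_indirectScore_iff_transGen.mp hm).ne_and hxy)

end IndirectScore

theorem stmt17 {A : Type*} [Fintype A] (v u w : A → A → ℝ)
    (hv : ∀ x y : A, 0 ≤ v x y)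
    (hbound : ∀ x y : A, x ≠ y → v x y + v y x ≤ 1)
    (hu : ∀ x y : A, u x y = if v y x < v x y then v x y else 0)
    (hw : ∀ x y : A, w x y = if v y x ≤ v x y then v x y else 0)
    (x y : A) (hxy : x ≠ y) :
    indirectScore u x y ≤ indirectScore w x y ∧
    indirectScore w x y ≤ indirectScore v x y ∧
    (1 / 2 < indirectScore v x y →
      indirectScore u x y = indirectScore v x y ∧
      indirectScore w x y = indirectScore v x y) ∧
    (indirectScore v x y = 1 / 2 → indirectScore w x y = indirectScore v x y) := by
  have huw : indirectScore u x y ≤ indirectScore w x y := indirectScore_mono fun a b => by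
    rw [hu, hw]; split_ifs <;> first | rfl | exact hv a b | linarith
  have hwv : indirectScore w x y ≤ indirectScore v x y := indirectScore_mono fun a b => by
    rw [hw]; split_ifs <;> first | rfl | exact hv a b
  refine ⟨huw, hwv, fun hgt => ?_, fun heq => ?_⟩
  · have hvu : indirectScore v x y ≤ indirectScore u x y :=
      le_indirectScore_of_ne hxy (fun a b hab hm => by
        rw [hu, if_pos (by linarith [hbound b a hab.symm])]; exact hm) le_rfl
    exact ⟨le_antisymm (huw.trans hwv) hvu, le_antisymm hwv (hvu.trans huw)⟩
  · refine le_antisymm hwv (le_indirectScore_of_ne hxy (fun a b hab hm => ?_) le_rfl)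
    rw [hw, if_pos (by linarith [hbound b a hab.symm])]; exact hm
end

section
/- (Monotonicity of indirect scores under a single raised score) Let A be a finite set, v a nonnegative score matrix, and ṽ obtained from v by increasing only the entry for the pair (a,b): ṽ_{ab} > v_{ab} and ṽ_{xy} = v_{xy} for all (x,y) ≠ (a,b). Then: (i) ṽ*_{xy} ≥ v*_{xy} for all distinct x,y; (ii) ṽ*_{xa} = v*_{xa} for all x ≠ a; (iii) ṽ*_{by} = v*_{by} for all y ≠ b. -/
open Function

theorem List.IsChain.imp_of_mem_dropLast_imp {α : Type*} {R S : α → α → Prop} {l : List α}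
    (H : ∀ a b : α, a ∈ l.dropLast → R a b → S a b) (p : l.IsChain R) : l.IsChain S := by
  induction p with grind

section PathScore

variable {A : Type*}

theorem pathScore_cons_cons_le (v : A → A → ℝ) (x y : A) (l : List A) :
    pathScore v (x :: y :: l) ≤ v x y := by
  cases l <;> simp [pathScore]

theorem le_pathScore_iff (v : A → A → ℝ) (c : ℝ) :
    ∀ {l : List A}, 2 ≤ l.length → (c ≤ pathScore v l ↔ l.IsChain fun p q => c ≤ v p q)
  | [x, y], _ => by simp [pathScore]
  | x :: y :: z :: l, _ => by
    rw [pathScore, le_min_iff, le_pathScore_iff v c (by simp)]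
    exact (List.isChain_cons_cons (R := fun p q => c ≤ v p q)).symm

theorem pathScore_mono {v w : A → A → ℝ} (h : v ≤ w) : ∀ l : List A, pathScore v l ≤ pathScore w l
  | [] | [_] => le_rfl
  | [x, y] => h x y
  | x :: y :: z :: l => min_le_min (h x y) (pathScore_mono h (y :: z :: l))

theorem pathScore_swap_reverse (v : A → A → ℝ) {l : List A} (hl : 2 ≤ l.length) :
    pathScore (swap v) l.reverse = pathScore v l :=
  eq_of_forall_le_iff fun c => by
    rw [le_pathScore_iff _ _ (by simpa using hl), le_pathScore_iff _ _ hl, List.isChain_reverse]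

end PathScore

section IsPath

variable {A : Type*} {x y : A} {l : List A}

theorem isPath_pair (x y : A) : IsPath x y [x, y] := by
  simp [IsPath]

instance (x y : A) : Nonempty {l : List A // IsPath x y l} :=
  ⟨⟨[x, y], isPath_pair x y⟩⟩

theorem IsPath.reverse (h : IsPath x y l) : IsPath y x l.reverse := by
  obtain ⟨hlen, hhead, hlast⟩ := h
  exact ⟨by simpa using hlen, by simpa using hlast, by simpa using hhead⟩

theorem IsPath.exists_prefix_notMem_dropLast {a : A} (h : IsPath x a l) (hx : x ≠ a) :
    ∃ l', IsPath x a l' ∧ l' <+: l ∧ a ∉ l'.dropLast := by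
  obtain ⟨-, hhead, hlast⟩ := h
  obtain ⟨s, t, rfl, ha⟩ := List.eq_append_cons_of_mem (List.mem_of_getLast? hlast)
  have hs : s ≠ [] := by
    rintro rfl
    simp only [List.nil_append, List.head?_cons, Option.some_inj] at hhead
    exact hx hhead.symm
  refine ⟨s ++ [a], ⟨?_, ?_, by simp⟩, ?_, by rwa [List.dropLast_concat]⟩
  · simpa [Nat.one_le_iff_ne_zero] using hs
  · rwa [List.head?_append_of_ne_nil _ hs] at hhead ⊢
  · exact ⟨t, by simp⟩

end IsPath

section IndirectScore

variable {A : Type*} [Finite A]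

theorem bddAbove_range_pathScore (v : A → A → ℝ) (x y : A) :
    BddAbove (Set.range fun l : {l : List A // IsPath x y l} => pathScore v l.1) := by
  obtain ⟨M, hM⟩ := (Set.finite_range (uncurry v)).bddAbove
  refine ⟨M, ?_⟩
  rintro _ ⟨⟨_ | ⟨p, _ | ⟨q, l⟩⟩, hlen, -⟩, rfl⟩
  · simp at hlen
  · simp at hlen
  · exact (pathScore_cons_cons_le v p q l).trans (hM ⟨(p, q), rfl⟩)

theorem indirectScore_le_of_forall_exists {v w : A → A → ℝ} {x y x' y' : A}
    (h : ∀ l, IsPath x y l → ∃ l', IsPath x' y' l' ∧ pathScore v l ≤ pathScore w l') :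
    indirectScore v x y ≤ indirectScore w x' y' :=
  ciSup_le fun ⟨l, hl⟩ =>
    let ⟨l', hl', hle⟩ := h l hl
    hle.trans (le_ciSup (bddAbove_range_pathScore w x' y') ⟨l', hl'⟩)

theorem indirectScore_mono_s19 {v w : A → A → ℝ} (h : v ≤ w) (x y : A) :
    indirectScore v x y ≤ indirectScore w x y :=
  indirectScore_le_of_forall_exists fun l hl => ⟨l, hl, pathScore_mono h l⟩

theorem indirectScore_swap (v : A → A → ℝ) (x y : A) :
    indirectScore (swap v) y x = indirectScore v x y := by
  refine le_antisymm (indirectScore_le_of_forall_exists fun l hl => ?_)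
    (indirectScore_le_of_forall_exists fun l hl => ?_)
  · exact ⟨l.reverse, hl.reverse, (pathScore_swap_reverse (swap v) hl.1).ge⟩
  · exact ⟨l.reverse, hl.reverse, (pathScore_swap_reverse v hl.1).ge⟩

theorem indirectScore_le_of_eq_of_ne_source {v w : A → A → ℝ} {a x : A}
    (h : ∀ p q, p ≠ a → w p q = v p q) (hx : x ≠ a) :
    indirectScore w x a ≤ indirectScore v x a := by
  refine indirectScore_le_of_forall_exists fun l hl => ?_
  obtain ⟨l', hl', hprefix, ha⟩ := hl.exists_prefix_notMem_dropLast hx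
  refine ⟨l', hl', (le_pathScore_iff v _ hl'.1).2 ?_⟩
  refine (((le_pathScore_iff w _ hl.1).1 le_rfl).prefix hprefix).imp_of_mem_dropLast_imp ?_
  intro p q hp hpq
  rwa [← h p q (ne_of_mem_of_not_mem hp ha)]

theorem indirectScore_eq_of_eq_of_ne_source {v w : A → A → ℝ} {a x : A}
    (h : ∀ p q, p ≠ a → w p q = v p q) (hx : x ≠ a) :
    indirectScore w x a = indirectScore v x a :=
  le_antisymm (indirectScore_le_of_eq_of_ne_source h hx)
    (indirectScore_le_of_eq_of_ne_source (fun p q hp => (h p q hp).symm) hx)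

theorem indirectScore_eq_of_eq_of_ne_target {v w : A → A → ℝ} {b y : A}
    (h : ∀ p q, q ≠ b → w p q = v p q) (hy : y ≠ b) :
    indirectScore w b y = indirectScore v b y := by
  rw [← indirectScore_swap w, ← indirectScore_swap v]
  exact indirectScore_eq_of_eq_of_ne_source (fun p q hp => h q p hp) hy

end IndirectScore

theorem stmt19_general {A : Type*} [Fintype A] (v vt : A → A → ℝ)
    (a b : A)
    (hraise : v a b < vt a b)
    (hsame : ∀ x y : A, (x, y) ≠ (a, b) → vt x y = v x y) :
    (∀ x y : A, x ≠ y → indirectScore v x y ≤ indirectScore vt x y) ∧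
    (∀ x : A, x ≠ a → indirectScore vt x a = indirectScore v x a) ∧
    (∀ y : A, y ≠ b → indirectScore vt b y = indirectScore v b y) := by
  have hle : v ≤ vt := by
    intro x y
    by_cases hxy : (x, y) = (a, b)
    · obtain ⟨rfl, rfl⟩ := Prod.mk.inj hxy
      exact hraise.le
    · exact (hsame x y hxy).ge
  refine ⟨fun x y _ => indirectScore_mono_s19 hle x y, fun x hx => ?_, fun y hy => ?_⟩
  · exact indirectScore_eq_of_eq_of_ne_source (fun p q hp => hsame p q (by simp [hp])) hx
  · exact indirectScore_eq_of_eq_of_ne_target (fun p q hq => hsame p q (by simp [hq])) hy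

/-- Monotonicity of indirect scores under a single raised score. -/
theorem stmt19 {A : Type*} [Fintype A] (v vt : A → A → ℝ)
    (hv : ∀ x y : A, 0 ≤ v x y)
    (a b : A) (hab : a ≠ b)
    (hraise : v a b < vt a b)
    (hsame : ∀ x y : A, (x, y) ≠ (a, b) → vt x y = v x y) :
    (∀ x y : A, x ≠ y → indirectScore v x y ≤ indirectScore vt x y) ∧
    (∀ x : A, x ≠ a → indirectScore vt x a = indirectScore v x a) ∧
    (∀ y : A, y ≠ b → indirectScore vt b y = indirectScore v b y) :=
  stmt19_general v vt a b hraise hsame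
end
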